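/- arXiv:2410.08630 — 5 statements merged into one kernel-verified Lean document; each statement's English description precedes it below -/
import Mathlib

section
/- Let a₁₁, a₁₂ : ℝ → ℝ be continuous, let α, β ∈ ℝ, and let A(t) = [[a₁₁(t), a₁₂(t)], [α·a₁₂(t), a₁₁(t) + β·a₁₂(t)]]. Define D(t) = ∫_{t₀}^t A(s) ds (entrywise). Then Φ(t) := exp(D(t)) satisfies Φ'(t) = A(t)·Φ(t) for all t and Φ(t₀) = I, i.e., Φ is a fundamental matrix of the system ẋ(t) = A(t)·x(t); consequently x(t) = Φ(t)·x₀ is the solution of ẋ = A(t)x with x(t₀) = x₀. -/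
open Matrix MeasureTheory intervalIntegral NormedSpace

attribute [local instance] Matrix.linftyOpNormedRing Matrix.linftyOpNormedAlgebra

/-!
Write `A(t) = a₁₁(t) • 1 + a₁₂(t) • B` with the constant matrix `B = !![0, 1; α, β]`; then
`D(t) = c(t) • 1 + d(t) • B` with `c, d` the primitives of `a₁₁, a₁₂`. Because `1` and `B`
commute, `exp (D t) = exp (c t • 1) * exp (d t • B)`, and the product rule gives
`Φ' = (c' • 1 + d' • B) * Φ = A * Φ`. (For a general `A`, whose values need not commute,
`exp (∫ A)` is not a fundamental matrix.)
-/

section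

variable {𝕂 𝔸 : Type*} [RCLike 𝕂] [NormedRing 𝔸] [NormedAlgebra 𝕂 𝔸] [CompleteSpace 𝔸]

theorem hasDerivAt_exp_smul_add_smul {x y : 𝔸} (hxy : Commute x y) {f g : 𝕂 → 𝕂}
    {f' g' t : 𝕂} (hf : HasDerivAt f f' t) (hg : HasDerivAt g g' t) :
    HasDerivAt (fun u => exp (f u • x + g u • y))
      ((f' • x + g' • y) * exp (f t • x + g t • y)) t := by
  -- `exp_add_of_commute` needs a `ℚ`-algebra structure; over `𝕂` use the ball version.
  have hball : ∀ z : 𝔸, z ∈ Metric.eball 0 (expSeries 𝕂 𝔸).radius := fun z => by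
    simp [expSeries_radius_eq_top]
  have hsplit : ∀ u, exp (f u • x + g u • y) = exp (f u • x) * exp (g u • y) := fun u =>
    exp_add_of_commute_of_mem_ball ((hxy.smul_left _).smul_right _) (hball _) (hball _)
  have hfx : HasDerivAt (fun u => exp (f u • x)) (f' • (x * exp (f t • x))) t :=
    (hasDerivAt_exp_smul_const' x (f t)).scomp t hf
  have hgy : HasDerivAt (fun u => exp (g u • y)) (g' • (y * exp (g t • y))) t :=
    (hasDerivAt_exp_smul_const' y (g t)).scomp t hg
  have hy : Commute y (exp (f t • x)) := (hxy.symm.smul_right _).exp_right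
  simp only [hsplit]
  refine (hfx.fun_mul hgy).congr_deriv ?_
  rw [smul_mul_assoc, mul_smul_comm, ← mul_assoc, ← hy.eq, add_mul, smul_mul_assoc,
    smul_mul_assoc, mul_assoc, mul_assoc]

end

theorem HasDerivAt.mulVec_const {n : Type*} [Fintype n] [DecidableEq n]
    {Φ : ℝ → Matrix n n ℝ} {Φ' : Matrix n n ℝ} {t : ℝ} (hΦ : HasDerivAt Φ Φ' t) (v : n → ℝ) :
    HasDerivAt (fun u => Φ u *ᵥ v) (Φ' *ᵥ v) t := by
  exact ((mulVecBilin ℝ ℝ).flip v).toContinuousLinearMap.hasFDerivAt.comp_hasDerivAt t hΦ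

theorem Matrix.of_intervalIntegral_smul_add_smul {m n : Type*} {f g : ℝ → ℝ} {a b : ℝ}
    (hf : IntervalIntegrable f volume a b) (hg : IntervalIntegrable g volume a b)
    (M N : Matrix m n ℝ) :
    (of fun i j => ∫ s in a..b, (f s • M + g s • N) i j) =
      (∫ s in a..b, f s) • M + (∫ s in a..b, g s) • N := by
  ext i j
  simp only [of_apply, add_apply, smul_apply, smul_eq_mul]
  rw [integral_add (hf.mul_const _) (hg.mul_const _), intervalIntegral.integral_mul_const,
    intervalIntegral.integral_mul_const]

theorem special_commuting_form_eq_smul_one_add_smul (α β p q : ℝ) :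
    !![p, q; α * q, p + β * q] = p • (1 : Matrix (Fin 2) (Fin 2) ℝ) + q • !![0, 1; α, β] := by
  ext i j
  fin_cases i <;> fin_cases j <;> simp [one_apply] <;> ring

/-- For `A(t)` of the special commuting form with continuous entries,
`Φ(t) = exp(D(t))` with `D(t) = ∫_{t₀}^t A(s) ds` is a fundamental matrix of `ẋ = A(t)x`:
it satisfies `Φ'(t) = A(t)Φ(t)` and `Φ(t₀) = I`, and `x(t) = Φ(t)x₀` solves the initial
value problem `ẋ = A(t)x`, `x(t₀) = x₀`. -/
theorem exp_primitive_is_fundamental_matrix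
    (α β t₀ : ℝ) (a₁₁ a₁₂ : ℝ → ℝ) (h₁₁ : Continuous a₁₁) (h₁₂ : Continuous a₁₂)
    (A : ℝ → Matrix (Fin 2) (Fin 2) ℝ)
    (hA : ∀ t, A t = !![a₁₁ t, a₁₂ t; α * a₁₂ t, a₁₁ t + β * a₁₂ t])
    (D : ℝ → Matrix (Fin 2) (Fin 2) ℝ)
    (hD : ∀ t, D t = Matrix.of fun i j => ∫ s in t₀..t, A s i j)
    (Φ : ℝ → Matrix (Fin 2) (Fin 2) ℝ)
    (hΦ : ∀ t, Φ t = exp (D t)) :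
    (∀ t, HasDerivAt Φ (A t * Φ t) t) ∧ Φ t₀ = 1 ∧
    ∀ (x₀ : Fin 2 → ℝ) (x : ℝ → Fin 2 → ℝ), (∀ t, x t = (Φ t).mulVec x₀) →
      (∀ t, HasDerivAt x ((A t).mulVec (x t)) t) ∧ x t₀ = x₀ := by
  set B : Matrix (Fin 2) (Fin 2) ℝ := !![0, 1; α, β]
  have hAB : ∀ t, A t = a₁₁ t • 1 + a₁₂ t • B := fun t =>
    (hA t).trans (special_commuting_form_eq_smul_one_add_smul α β _ _)
  have hDB : ∀ t, D t = (∫ s in t₀..t, a₁₁ s) • 1 + (∫ s in t₀..t, a₁₂ s) • B := fun t => by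
    simp only [hD, hAB]
    exact of_intervalIntegral_smul_add_smul (h₁₁.intervalIntegrable _ _)
      (h₁₂.intervalIntegrable _ _) _ _
  have hΦB : Φ = fun t => exp ((∫ s in t₀..t, a₁₁ s) • 1 + (∫ s in t₀..t, a₁₂ s) • B) :=
    funext fun t => by rw [hΦ, hDB]
  have hΦA : ∀ t, HasDerivAt Φ (A t * Φ t) t := fun t => by
    rw [hΦB, hAB]
    exact hasDerivAt_exp_smul_add_smul (Commute.one_left B)
      (h₁₁.integral_hasStrictDerivAt t₀ t).hasDerivAt
      (h₁₂.integral_hasStrictDerivAt t₀ t).hasDerivAt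
  have hΦ₀ : Φ t₀ = 1 := by simp [hΦB]
  refine ⟨hΦA, hΦ₀, fun x₀ x hx => ⟨fun t => ?_, by rw [hx, hΦ₀, one_mulVec]⟩⟩
  rw [hx t, funext hx, mulVec_mulVec]
  exact (hΦA t).mulVec_const x₀
end

section
/- Let α, β ∈ ℝ with α + β²/4 > 0 and β > 0, set γ = √(α + β²/4) and M = [[−β/2, 1], [α, β/2]]. Let f, g : ℝ → ℝ with f bounded and g(t) → ∞ as t → ∞, and define Φ(t) = e^{f(t) + (β/2)g(t)} · exp(g(t)·M). Then ‖Φ(t)‖ → ∞ as t → ∞. -/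
open Matrix NormedSpace Filter

attribute [local instance] Matrix.linftyOpNormedRing Matrix.linftyOpNormedAlgebra

/-!
Since `M ^ 2 = γ ^ 2 • 1`, the exponential series splits into its even and odd parts and
`exp (s • M) = cosh (s γ) • 1 + (sinh (s γ) / γ) • M`. Hence the `(0, 1)` entry of `Φ t` is
`e^{f t + β g t / 2} sinh (g t γ) / γ`, which for `g t ≥ 0` is at least `e^{-C} g t`
(as `β > 0` and `sinh x ≥ x`), and every entry is bounded by the norm.
-/

section

variable {𝔸 : Type*} [Ring 𝔸] [Algebra ℝ 𝔸] [TopologicalSpace 𝔸] [IsTopologicalRing 𝔸]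
  [ContinuousSMul ℝ 𝔸] [T2Space 𝔸]

theorem exp_eq_cosh_add_sinh_div_smul_of_sq_eq {a : 𝔸} {c : ℝ} (hc : c ≠ 0)
    (ha : a ^ 2 = c ^ 2 • (1 : 𝔸)) :
    exp a = Real.cosh c • (1 : 𝔸) + (Real.sinh c / c) • a := by
  have hpow (n : ℕ) : a ^ (2 * n) = c ^ (2 * n) • (1 : 𝔸) := by
    rw [pow_mul, ha, smul_pow, one_pow, ← pow_mul]
  rw [exp_eq_tsum ℝ]
  refine HasSum.tsum_eq (HasSum.even_add_odd ?_ ?_)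
  · convert (Real.hasSum_cosh c).smul_const (1 : 𝔸) using 2 with n
    rw [hpow, smul_smul, div_eq_inv_mul]
  · convert ((Real.hasSum_sinh c).div_const c).smul_const a using 2 with n
    rw [pow_succ, hpow, smul_mul_assoc, one_mul, smul_smul]
    congr 1
    field_simp
    ring

theorem exp_smul_eq_cosh_add_sinh_div_smul_of_sq_eq {a : 𝔸} {γ : ℝ} (hγ : γ ≠ 0)
    (ha : a ^ 2 = γ ^ 2 • (1 : 𝔸)) (s : ℝ) :
    exp (s • a) = Real.cosh (s * γ) • (1 : 𝔸) + (Real.sinh (s * γ) / γ) • a := by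
  rcases eq_or_ne s 0 with rfl | hs
  · simp
  rw [exp_eq_cosh_add_sinh_div_smul_of_sq_eq (mul_ne_zero hs hγ), smul_smul]
  · congr 2
    field_simp
  · rw [smul_pow, ha, smul_smul, mul_pow]

end

section

attribute [local instance] Matrix.linftyOpSeminormedAddCommGroup

theorem Matrix.norm_entry_le_linfty_opNorm {m n α : Type*} [Fintype m] [Fintype n]
    [SeminormedAddCommGroup α] (A : Matrix m n α) (i : m) (j : n) : ‖A i j‖ ≤ ‖A‖ := by
  suffices ‖A i j‖₊ ≤ ‖A‖₊ from mod_cast this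
  rw [linfty_opNNNorm_def]
  exact (Finset.single_le_sum (fun k _ => zero_le) (Finset.mem_univ j)).trans
    (Finset.le_sup (f := fun i => ∑ j, ‖A i j‖₊) (Finset.mem_univ i))

end

theorem sq_fin_two_eq_smul_one (α β : ℝ) :
    !![-β/2, 1; α, β/2] ^ 2 = (α + β ^ 2 / 4) • (1 : Matrix (Fin 2) (Fin 2) ℝ) := by
  ext i j; fin_cases i <;> fin_cases j <;> simp [sq] <;> ring

/-- Case `γ > 0`, `β > 0`: if `f` is bounded and `g(t) → ∞`, then `‖Φ(t)‖ → ∞` as `t → ∞`,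
where `Φ(t) = e^{f(t)+(β/2)g(t)}·exp(g(t)M)`. -/
theorem norm_Phi_tendsto_atTop_of_g_atTop (α β : ℝ) (hpos : 0 < α + β ^ 2 / 4) (hβ : 0 < β)
    (M : Matrix (Fin 2) (Fin 2) ℝ) (hM : M = !![-β/2, 1; α, β/2])
    (f g : ℝ → ℝ) (hf : ∃ C, ∀ t, |f t| ≤ C)
    (hg : Tendsto g atTop atTop)
    (Φ : ℝ → Matrix (Fin 2) (Fin 2) ℝ)
    (hΦ : ∀ t, Φ t = Real.exp (f t + β/2 * g t) • NormedSpace.exp (g t • M)) :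
    Tendsto (fun t => ‖Φ t‖) atTop atTop := by
  obtain ⟨C, hC⟩ := hf
  set γ := √(α + β ^ 2 / 4)
  have hγ : 0 < γ := Real.sqrt_pos.2 hpos
  have hM2 : M ^ 2 = γ ^ 2 • (1 : Matrix (Fin 2) (Fin 2) ℝ) := by
    rw [hM, sq_fin_two_eq_smul_one, Real.sq_sqrt hpos.le]
  have hentry (t : ℝ) : Φ t 0 1 = Real.exp (f t + β/2 * g t) * (Real.sinh (g t * γ) / γ) := by
    rw [hΦ, Matrix.smul_apply, exp_smul_eq_cosh_add_sinh_div_smul_of_sq_eq hγ.ne' hM2, hM]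
    simp
  refine tendsto_atTop_mono' atTop ?_ (hg.const_mul_atTop (Real.exp_pos (-C)))
  filter_upwards [hg.eventually_ge_atTop 0] with t ht
  have hexp : Real.exp (-C) ≤ Real.exp (f t + β/2 * g t) := by
    gcongr
    nlinarith [(abs_le.1 (hC t)).1]
  have hsinh : g t ≤ Real.sinh (g t * γ) / γ := by
    rw [le_div_iff₀ hγ]
    exact Real.self_le_sinh_iff.2 (by positivity)
  calc Real.exp (-C) * g t ≤ Real.exp (f t + β/2 * g t) * (Real.sinh (g t * γ) / γ) := by
        gcongr
    _ = Φ t 0 1 := (hentry t).symm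
    _ ≤ ‖Φ t‖ := (le_abs_self _).trans ((Φ t).norm_entry_le_linfty_opNorm 0 1)
end

section
/- Let a₁₁, a₁₂ : ℝ → ℝ be continuous and T-periodic, let α, β ∈ ℝ, and let A(t) = [[a₁₁(t), a₁₂(t)], [α·a₁₂(t), a₁₁(t) + β·a₁₂(t)]]. Define D(t) = ∫₀^t A(s) ds and Φ(t) = exp(D(t)) (the fundamental matrix with Φ(0) = I). Then the monodromy matrix is C = Φ(T) = exp(D(T)), and the constant matrix B := (1/T)·D(T) = (1/T)∫₀^T A(s) ds satisfies C = exp(T·B); hence the Floquet exponents (eigenvalues of B) are the eigenvalues of the time-average matrix Ā = (1/T)∫₀^T A(s) ds, and are given explicitly by λ± = ā₁₁ + (β/2)·ā₁₂ ± γ·ā₁₂, where ā₁₁ = (1/T)∫₀^T a₁₁, ā₁₂ = (1/T)∫₀^T a₁₂, and γ² = α + β²/4. -/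
/-! Write `A(t) = a₁₁(t) • 1 + a₁₂(t) • M` with the constant matrix `M = !![0, 1; α, β]`. Then every
`A(t)`, and hence every `D(t)`, lies in the commutative algebra generated by `M`, so the
exponentials of the `D(t)` multiply like scalars; periodicity gives `D(t + T) = D(t) + D(T)`,
whence `Φ(t + T) = Φ(t) Φ(T)`. The matrix `B = ā₁₁ • 1 + ā₁₂ • M` has eigenvalues `ā₁₁ + ā₁₂ μ`
where `μ = β/2 ± γ` are the roots of `μ² - βμ - α`, the characteristic polynomial of `M`. -/

open Matrix MeasureTheory intervalIntegral NormedSpace Polynomial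

attribute [local instance] Matrix.linftyOpNormedRing Matrix.linftyOpNormedAlgebra

theorem Matrix.specialForm_eq_smul_one_add_smul {R : Type*} [CommRing R] (α β a b : R) :
    !![a, b; α * b, a + β * b] = a • (1 : Matrix (Fin 2) (Fin 2) R) + b • !![0, 1; α, β] := by
  ext i j
  fin_cases i <;> fin_cases j <;> simp [mul_comm]

theorem Matrix.map_specialForm {R S : Type*} [CommRing R] [CommRing S] (f : R →+* S)
    (α β a b : R) :
    (!![a, b; α * b, a + β * b]).map f = !![f a, f b; f α * f b, f a + f β * f b] := by
  ext i j
  fin_cases i <;> fin_cases j <;> simp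

theorem Matrix.charpoly_specialForm {K : Type*} [Field K] [NeZero (2 : K)] (α β a b γ : K)
    (hγ : γ ^ 2 = α + β ^ 2 / 4) :
    (!![a, b; α * b, a + β * b]).charpoly =
      (X - C (a + β / 2 * b + γ * b)) * (X - C (a + β / 2 * b - γ * b)) := by
  have h2 : (2 : K) ≠ 0 := two_ne_zero
  have h4 : (4 : K) ≠ 0 := by simpa [two_mul, ← two_add_two_eq_four] using mul_ne_zero h2 h2
  have hγ' : 4 * γ ^ 2 = 4 * α + β ^ 2 := by rw [hγ, mul_add, mul_div_cancel₀ _ h4]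
  rw [charpoly_fin_two, trace_fin_two_of, det_fin_two_of]
  have hsum : a + (a + β * b) = (a + β / 2 * b + γ * b) + (a + β / 2 * b - γ * b) := by
    field_simp; ring
  have hprod :
      a * (a + β * b) - b * (α * b) = (a + β / 2 * b + γ * b) * (a + β / 2 * b - γ * b) := by
    field_simp
    linear_combination b ^ 2 * hγ'
  rw [hsum, hprod, C_add, C_mul]
  ring

theorem commute_smul_one_add_smul {R A : Type*} [CommSemiring R] [Semiring A] [Algebra R A]
    (M : A) (a b c d : R) : Commute (a • 1 + b • M) (c • 1 + d • M) := by
  have hM : Commute M (c • 1 + d • M) :=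
    ((Commute.one_right M).smul_right c).add_right ((Commute.refl M).smul_right d)
  exact ((Commute.one_left _).smul_left a).add_left (hM.smul_left b)

theorem Matrix.of_intervalIntegral_smul_one_add_smul {n : Type*} [Fintype n] [DecidableEq n]
    (M : Matrix n n ℝ) {f g : ℝ → ℝ} {a b : ℝ} (hf : IntervalIntegrable f volume a b)
    (hg : IntervalIntegrable g volume a b) :
    (Matrix.of fun i j => ∫ s in a..b, (f s • (1 : Matrix n n ℝ) + g s • M) i j) =
      (∫ s in a..b, f s) • 1 + (∫ s in a..b, g s) • M := by
  ext i j
  simp [integral_add (hf.mul_const _) (hg.mul_const _), intervalIntegral.integral_mul_const]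

theorem Function.Periodic.intervalIntegral_zero_add_eq_add {E : Type*} [NormedAddCommGroup E]
    [NormedSpace ℝ E] {f : ℝ → E} {T : ℝ}
    (hf : Function.Periodic f T) (hc : Continuous f) (t : ℝ) :
    ∫ s in (0 : ℝ)..t + T, f s = (∫ s in (0 : ℝ)..t, f s) + ∫ s in (0 : ℝ)..T, f s := by
  simpa using hf.intervalIntegral_add_eq_add 0 t fun _ _ => hc.intervalIntegrable _ _

/-- For a `T`-periodic matrix of the special commuting form, the fundamental matrix is
`Φ(t) = exp(D(t))` with `D(t) = ∫₀ᵗ A(s) ds`, the monodromy matrix is `C = Φ(T) = exp(D(T))`,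
and `B = (1/T)·D(T)` (the time-average of `A`) satisfies `C = exp(TB)`; the Floquet exponents
(the eigenvalues of `B`, i.e. of the average matrix `Ā`) are
`λ± = ā₁₁ + (β/2)ā₁₂ ± γ·ā₁₂` with `γ² = α + β²/4`. -/
theorem floquet_exponents_of_specialForm
    (α β T : ℝ) (hT : 0 < T)
    (a₁₁ a₁₂ : ℝ → ℝ) (h₁₁ : Continuous a₁₁) (h₁₂ : Continuous a₁₂)
    (hper₁₁ : ∀ t, a₁₁ (t + T) = a₁₁ t) (hper₁₂ : ∀ t, a₁₂ (t + T) = a₁₂ t)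
    (A : ℝ → Matrix (Fin 2) (Fin 2) ℝ)
    (hA : ∀ t, A t = !![a₁₁ t, a₁₂ t; α * a₁₂ t, a₁₁ t + β * a₁₂ t])
    (D : ℝ → Matrix (Fin 2) (Fin 2) ℝ)
    (hD : ∀ t, D t = Matrix.of fun i j => ∫ s in (0:ℝ)..t, A s i j)
    (Φ : ℝ → Matrix (Fin 2) (Fin 2) ℝ) (hΦ : ∀ t, Φ t = exp (D t))
    (B : Matrix (Fin 2) (Fin 2) ℝ) (hB : B = T⁻¹ • D T)
    (γ : ℂ) (hγ : γ ^ 2 = (α : ℂ) + (β : ℂ) ^ 2 / 4)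
    (a₁₁bar a₁₂bar : ℝ)
    (h₁₁bar : a₁₁bar = T⁻¹ * ∫ s in (0:ℝ)..T, a₁₁ s)
    (h₁₂bar : a₁₂bar = T⁻¹ * ∫ s in (0:ℝ)..T, a₁₂ s) :
    (∀ t, Φ (t + T) = Φ t * Φ T) ∧
    Φ T = exp (D T) ∧
    exp (T • B) = Φ T ∧
    B = (Matrix.of fun i j => T⁻¹ * ∫ s in (0:ℝ)..T, A s i j) ∧
    (B.map (algebraMap ℝ ℂ)).charpoly =
      (X - C ((a₁₁bar : ℂ) + (β : ℂ)/2 * a₁₂bar + γ * a₁₂bar)) *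
      (X - C ((a₁₁bar : ℂ) + (β : ℂ)/2 * a₁₂bar - γ * a₁₂bar)) := by
  set M : Matrix (Fin 2) (Fin 2) ℝ := !![0, 1; α, β]
  have hDform : ∀ t, D t = (∫ s in (0:ℝ)..t, a₁₁ s) • 1 + (∫ s in (0:ℝ)..t, a₁₂ s) • M :=
    fun t => by
      simp only [hD, hA, specialForm_eq_smul_one_add_smul]
      exact of_intervalIntegral_smul_one_add_smul M (h₁₁.intervalIntegrable _ _)
        (h₁₂.intervalIntegrable _ _)
  have hDadd : ∀ t, D (t + T) = D t + D T := fun t => by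
    simp only [hDform, Function.Periodic.intervalIntegral_zero_add_eq_add hper₁₁ h₁₁,
      Function.Periodic.intervalIntegral_zero_add_eq_add hper₁₂ h₁₂, add_smul]
    abel
  have hcomm : ∀ t, Commute (D t) (D T) := fun t => by
    rw [hDform, hDform]
    exact commute_smul_one_add_smul M _ _ _ _
  have hBform : B = !![a₁₁bar, a₁₂bar; α * a₁₂bar, a₁₁bar + β * a₁₂bar] := by
    rw [hB, hDform, specialForm_eq_smul_one_add_smul, smul_add, smul_smul, smul_smul, h₁₁bar,
      h₁₂bar]
  refine ⟨fun t => ?_, hΦ T, ?_, ?_, ?_⟩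
  · rw [hΦ, hΦ, hΦ, hDadd, Matrix.exp_add_of_commute _ _ (hcomm t)]
  · rw [hB, smul_inv_smul₀ hT.ne', hΦ]
  · rw [hB, hD]
    rfl
  · rw [hBform, map_specialForm]
    exact charpoly_specialForm _ _ _ _ γ hγ
end

section
/- Let σ₀, σ₁, σ₂ ∈ ℝ with σ₂ ≠ 0, let a : ℝ → ℝ be continuous and T-periodic, and let A(t) = [[σ₀ − a(t), −σ₂·a(t)], [σ₁·a(t), σ₀ + a(t)]]. Then A(t) has the special commuting form [[a₁₁(t), a₁₂(t)], [α·a₁₂(t), a₁₁(t) + β·a₁₂(t)]] with α = −σ₁/σ₂, β = −2/σ₂, a₁₁ = σ₀ − a, a₁₂ = −σ₂·a, and the Floquet exponents of the system ẋ = A(t)x are λ± = σ₀ ± (√(1 − σ₁σ₂)/T)·∫₀^T a(s) ds (where for σ₁σ₂ > 1 the square root is purely imaginary). -/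
open Matrix MeasureTheory intervalIntegral Polynomial

/-!
The matrix `A(t)` is `σ₀ • 1 + a(t) • D` with the constant matrix `D = [[-1, -σ₂], [σ₁, 1]]`, so
its time average is `σ₀ • 1 + ā • D`, where `ā` is the average of `a`. Since `tr D = 0` and
`det D = σ₁σ₂ - 1 = -γ²`, the averaged matrix has trace `2σ₀` and determinant `σ₀² - γ²ā²`,
which are the sum and product of `σ₀ ± γā`.
-/

theorem Matrix.charpoly_fin_two_eq_of_trace_of_det {R : Type*} [CommRing R] [Nontrivial R]
    {M : Matrix (Fin 2) (Fin 2) R} {p q : R} (htr : M.trace = p + q) (hdet : M.det = p * q) :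
    M.charpoly = (X - C p) * (X - C q) := by
  rw [charpoly_fin_two, htr, hdet, C_add, C_mul]
  ring

theorem intervalIntegral.inv_mul_integral_const_add_smul {n : Type*} {C D : Matrix n n ℝ}
    {a : ℝ → ℝ} {T : ℝ} (hT : T ≠ 0) (ha : IntervalIntegrable a volume 0 T) :
    (Matrix.of fun i j => T⁻¹ * ∫ s in (0:ℝ)..T, (C + a s • D) i j) =
      C + (T⁻¹ * ∫ s in (0:ℝ)..T, a s) • D := by
  ext i j
  simp only [of_apply, Matrix.add_apply, Matrix.smul_apply, smul_eq_mul]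
  rw [integral_add intervalIntegrable_const (ha.mul_const _), integral_const,
    integral_mul_const, smul_eq_mul, sub_zero]
  field_simp

theorem grau_matrix_eq_smul_one_add_smul (σ₀ σ₁ σ₂ x : ℝ) :
    !![σ₀ - x, -σ₂ * x; σ₁ * x, σ₀ + x] = σ₀ • (1 : Matrix (Fin 2) (Fin 2) ℝ) +
      x • !![-1, -σ₂; σ₁, 1] := by
  ext i j
  fin_cases i <;> fin_cases j <;> simp <;> ring

theorem grau_matrix_eq_special_commuting_form {σ₂ : ℝ} (hσ₂ : σ₂ ≠ 0) (σ₀ σ₁ x : ℝ) :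
    !![σ₀ - x, -σ₂ * x; σ₁ * x, σ₀ + x] =
      !![σ₀ - x, -σ₂ * x; (-σ₁ / σ₂) * (-σ₂ * x), (σ₀ - x) + (-2 / σ₂) * (-σ₂ * x)] := by
  have h₁₀ : -σ₁ / σ₂ * (-σ₂ * x) = σ₁ * x := by field_simp
  have h₁₁ : σ₀ - x + -2 / σ₂ * (-σ₂ * x) = σ₀ + x := by field_simp; ring
  rw [h₁₀, h₁₁]

theorem floquet_exponents_grau_example_general
    (σ₀ σ₁ σ₂ : ℝ) (hσ₂ : σ₂ ≠ 0) (T : ℝ) (hT : 0 < T)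
    (a : ℝ → ℝ) (ha : Continuous a)
    (A : ℝ → Matrix (Fin 2) (Fin 2) ℝ)
    (hA : ∀ t, A t = !![σ₀ - a t, -σ₂ * a t; σ₁ * a t, σ₀ + a t])
    (Abar : Matrix (Fin 2) (Fin 2) ℝ)
    (hAbar : Abar = Matrix.of fun i j => T⁻¹ * ∫ s in (0:ℝ)..T, A s i j)
    (γ : ℂ) (hγ : γ ^ 2 = 1 - (σ₁ : ℂ) * σ₂) :
    (∀ t, A t =
      !![(σ₀ - a t), (-σ₂ * a t);
         (-σ₁/σ₂) * (-σ₂ * a t), (σ₀ - a t) + (-2/σ₂) * (-σ₂ * a t)]) ∧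
    (Abar.map (algebraMap ℝ ℂ)).charpoly =
      (X - C ((σ₀ : ℂ) + γ * ((T⁻¹ : ℝ) * ∫ s in (0:ℝ)..T, a s : ℝ))) *
      (X - C ((σ₀ : ℂ) - γ * ((T⁻¹ : ℝ) * ∫ s in (0:ℝ)..T, a s : ℝ))) := by
  refine ⟨fun t => (hA t).trans (grau_matrix_eq_special_commuting_form hσ₂ σ₀ σ₁ (a t)), ?_⟩
  set m := T⁻¹ * ∫ s in (0:ℝ)..T, a s
  have hAbar_eq : Abar = !![σ₀ - m, -σ₂ * m; σ₁ * m, σ₀ + m] := by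
    simp_rw [hAbar, hA, grau_matrix_eq_smul_one_add_smul]
    exact inv_mul_integral_const_add_smul hT.ne' (ha.intervalIntegrable 0 T)
  subst hAbar_eq
  apply charpoly_fin_two_eq_of_trace_of_det
  · simp [trace_fin_two]
  · rw [← RingHom.mapMatrix_apply, ← RingHom.map_det, det_fin_two_of, Complex.coe_algebraMap]
    push_cast
    linear_combination (m : ℂ) ^ 2 * hγ

/-- The example of Grau et al.: `A(t) = [[σ₀−a, −σ₂a], [σ₁a, σ₀+a]]` has the special
commuting form with `α = −σ₁/σ₂`, `β = −2/σ₂`, `a₁₁ = σ₀−a`, `a₁₂ = −σ₂a`, and the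
Floquet exponents (eigenvalues of the time-average matrix `Ā = (1/T)∫₀ᵀ A`) are
`λ± = σ₀ ± γ·(1/T)∫₀ᵀ a` where `γ² = 1 − σ₁σ₂` (purely imaginary when `σ₁σ₂ > 1`). -/
theorem floquet_exponents_grau_example
    (σ₀ σ₁ σ₂ : ℝ) (hσ₂ : σ₂ ≠ 0) (T : ℝ) (hT : 0 < T)
    (a : ℝ → ℝ) (ha : Continuous a) (haper : ∀ t, a (t + T) = a t)
    (A : ℝ → Matrix (Fin 2) (Fin 2) ℝ)
    (hA : ∀ t, A t = !![σ₀ - a t, -σ₂ * a t; σ₁ * a t, σ₀ + a t])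
    (Abar : Matrix (Fin 2) (Fin 2) ℝ)
    (hAbar : Abar = Matrix.of fun i j => T⁻¹ * ∫ s in (0:ℝ)..T, A s i j)
    (γ : ℂ) (hγ : γ ^ 2 = 1 - (σ₁ : ℂ) * σ₂) :
    (∀ t, A t =
      !![(σ₀ - a t), (-σ₂ * a t);
         (-σ₁/σ₂) * (-σ₂ * a t), (σ₀ - a t) + (-2/σ₂) * (-σ₂ * a t)]) ∧
    (Abar.map (algebraMap ℝ ℂ)).charpoly =
      (X - C ((σ₀ : ℂ) + γ * ((T⁻¹ : ℝ) * ∫ s in (0:ℝ)..T, a s : ℝ))) *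
      (X - C ((σ₀ : ℂ) - γ * ((T⁻¹ : ℝ) * ∫ s in (0:ℝ)..T, a s : ℝ))) :=
  floquet_exponents_grau_example_general σ₀ σ₁ σ₂ hσ₂ T hT a ha A hA Abar hAbar γ hγ
end

section
/- Let σ₀, σ₁, σ₂ ∈ ℝ with σ₂ ≠ 0, σ₀ < 0 and σ₁·σ₂ > 1, let a : ℝ → ℝ be continuous and T-periodic, and let A(t) = [[σ₀ − a(t), −σ₂·a(t)], [σ₁·a(t), σ₀ + a(t)]]. Then every solution x : ℝ → ℝ² of ẋ(t) = A(t)·x(t) satisfies x(t) → 0 as t → ∞; i.e., the zero solution is asymptotically stable. -/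
/-!
For `P = !![σ₁, 1; 1, σ₂]` the matrix `A(t) - σ₀ I = a(t) • !![-1, -σ₂; σ₁, 1]` is skew with
respect to `P`, so `Aᵀ P + P A = 2σ₀ P` for every `t`, whatever `a` is. Hence the quadratic form
`V(x) = xᵀ P x` satisfies `V̇ = 2σ₀ V` along solutions and equals `e^{2σ₀ t} V(x(0))`.
When `σ₁σ₂ > 1`, `(σ₁ + σ₂) V` dominates `(σ₁σ₂ - 1) |x|²`, so `x(t) → 0` because `σ₀ < 0`.
-/

open Matrix Filter Topology

theorem eq_exp_mul_of_hasDerivAt_mul {f : ℝ → ℝ} {k : ℝ} (hf : ∀ t, HasDerivAt f (k * f t) t)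
    (t : ℝ) : f t = Real.exp (k * t) * f 0 := by
  have hderiv (s : ℝ) : HasDerivAt (fun s => Real.exp (-k * s) * f s) 0 s :=
    ((hasDerivAt_id' s).const_mul (-k)).exp.fun_mul (hf s) |>.congr_deriv (by ring)
  have hconst := is_const_of_deriv_eq_zero (fun s => (hderiv s).differentiableAt)
    (fun s => (hderiv s).deriv) t 0
  simp only [mul_zero, Real.exp_zero, one_mul] at hconst
  rw [← hconst, ← mul_assoc, ← Real.exp_add, neg_mul, add_neg_cancel, Real.exp_zero, one_mul]

section QuadraticForm

variable {n : Type*} [Fintype n]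

theorem hasDerivAt_dotProduct_mulVec_self (P : Matrix n n ℝ) {x : ℝ → n → ℝ} {x' : n → ℝ}
    {t : ℝ} (hx : HasDerivAt x x' t) :
    HasDerivAt (fun s => x s ⬝ᵥ P *ᵥ x s) (x' ⬝ᵥ P *ᵥ x t + x t ⬝ᵥ P *ᵥ x') t := by
  have hPx : HasDerivAt (fun s => P *ᵥ x s) (P *ᵥ x') t :=
    (Matrix.mulVecLin P).toContinuousLinearMap.hasFDerivAt.comp_hasDerivAt t hx
  have := HasDerivAt.fun_sum (u := Finset.univ) fun i _ =>
    (hasDerivAt_pi.1 hx i).fun_mul (hasDerivAt_pi.1 hPx i)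
  simpa only [dotProduct, Finset.sum_add_distrib] using this

theorem dotProduct_mulVec_self_eq_exp_mul (P : Matrix n n ℝ) {M : ℝ → Matrix n n ℝ} {k : ℝ}
    (hM : ∀ t, (M t)ᵀ * P + P * M t = k • P) {x : ℝ → n → ℝ}
    (hx : ∀ t, HasDerivAt x (M t *ᵥ x t) t) (t : ℝ) :
    x t ⬝ᵥ P *ᵥ x t = Real.exp (k * t) * (x 0 ⬝ᵥ P *ᵥ x 0) := by
  refine eq_exp_mul_of_hasDerivAt_mul (f := fun s => x s ⬝ᵥ P *ᵥ x s) (fun s => ?_) t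
  have hsum : x s ⬝ᵥ ((M s)ᵀ * P + P * M s) *ᵥ x s =
      M s *ᵥ x s ⬝ᵥ P *ᵥ x s + x s ⬝ᵥ P *ᵥ M s *ᵥ x s := by
    rw [add_mulVec, dotProduct_add, ← mulVec_mulVec, ← mulVec_mulVec,
      dotProduct_mulVec (x s) (M s)ᵀ, vecMul_transpose]
  rw [hM, smul_mulVec, dotProduct_smul, smul_eq_mul] at hsum
  exact hsum ▸ hasDerivAt_dotProduct_mulVec_self P (hx s)

end QuadraticForm

theorem transpose_mul_add_mul_eq_smul (σ₀ σ₁ σ₂ c : ℝ) :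
    (!![σ₀ - c, -σ₂ * c; σ₁ * c, σ₀ + c])ᵀ * !![σ₁, 1; 1, σ₂] +
      !![σ₁, 1; 1, σ₂] * !![σ₀ - c, -σ₂ * c; σ₁ * c, σ₀ + c] = (2 * σ₀) • !![σ₁, 1; 1, σ₂] := by
  ext i j
  fin_cases i <;> fin_cases j <;> simp [Matrix.mul_apply, Fin.sum_univ_two] <;> ring

theorem sq_add_sq_mul_le_dotProduct_mulVec (σ₁ σ₂ : ℝ) (v : Fin 2 → ℝ) :
    (σ₁ * σ₂ - 1) * (v 0 ^ 2 + v 1 ^ 2) ≤ (σ₁ + σ₂) * (v ⬝ᵥ !![σ₁, 1; 1, σ₂] *ᵥ v) := by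
  have hsos : (σ₁ + σ₂) * (v ⬝ᵥ !![σ₁, 1; 1, σ₂] *ᵥ v) = (σ₁ * v 0 + v 1) ^ 2 +
      (v 0 + σ₂ * v 1) ^ 2 + (σ₁ * σ₂ - 1) * (v 0 ^ 2 + v 1 ^ 2) := by
    simp [dotProduct, mulVec, Fin.sum_univ_two]
    ring
  rw [hsos]
  linarith [sq_nonneg (σ₁ * v 0 + v 1), sq_nonneg (v 0 + σ₂ * v 1)]

theorem tendsto_nhds_zero_of_sq_le {α : Type*} {l : Filter α} {f g : α → ℝ}
    (hg : Tendsto g l (𝓝 0)) (hfg : ∀ a, f a ^ 2 ≤ g a) : Tendsto f l (𝓝 0) := by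
  have hsqrt : Tendsto (fun a => √(g a)) l (𝓝 0) := by simpa using hg.sqrt
  refine squeeze_zero_norm (fun a => ?_) hsqrt
  rw [Real.norm_eq_abs, ← Real.sqrt_sq_eq_abs]
  exact Real.sqrt_le_sqrt (hfg a)

theorem zero_solution_asymptotically_stable_general
    (σ₀ σ₁ σ₂ : ℝ) (hσ₀ : σ₀ < 0) (hσ₁₂ : 1 < σ₁ * σ₂)
    (a : ℝ → ℝ)
    (A : ℝ → Matrix (Fin 2) (Fin 2) ℝ)
    (hA : ∀ t, A t = !![σ₀ - a t, -σ₂ * a t; σ₁ * a t, σ₀ + a t])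
    (x : ℝ → Fin 2 → ℝ)
    (hx : ∀ t, HasDerivAt x ((A t).mulVec (x t)) t) :
    Tendsto x atTop (nhds 0) := by
  set P : Matrix (Fin 2) (Fin 2) ℝ := !![σ₁, 1; 1, σ₂]
  have hV (t : ℝ) : x t ⬝ᵥ P *ᵥ x t = Real.exp (2 * σ₀ * t) * (x 0 ⬝ᵥ P *ᵥ x 0) :=
    dotProduct_mulVec_self_eq_exp_mul P
      (fun s => hA s ▸ transpose_mul_add_mul_eq_smul σ₀ σ₁ σ₂ (a s)) hx t
  have hdecay :
      Tendsto (fun t => (σ₁ + σ₂) * (x t ⬝ᵥ P *ᵥ x t) / (σ₁ * σ₂ - 1)) atTop (𝓝 0) := by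
    have hexp : Tendsto (fun t => Real.exp (2 * σ₀ * t)) atTop (𝓝 0) :=
      Real.tendsto_exp_atBot.comp (tendsto_id.const_mul_atTop_of_neg (by linarith))
    have h := ((hexp.mul_const (x 0 ⬝ᵥ P *ᵥ x 0)).const_mul (σ₁ + σ₂)).div_const (σ₁ * σ₂ - 1)
    rw [zero_mul, mul_zero, zero_div] at h
    exact h.congr fun t => by rw [hV t]
  refine tendsto_pi_nhds.2 fun i => tendsto_nhds_zero_of_sq_le hdecay fun t => ?_
  have hcoord : x t i ^ 2 ≤ x t 0 ^ 2 + x t 1 ^ 2 := by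
    fin_cases i <;> simp [sq_nonneg]
  rw [le_div_iff₀ (by linarith)]
  calc x t i ^ 2 * (σ₁ * σ₂ - 1) ≤ (σ₁ * σ₂ - 1) * (x t 0 ^ 2 + x t 1 ^ 2) := by
        rw [mul_comm]; gcongr
    _ ≤ (σ₁ + σ₂) * (x t ⬝ᵥ P *ᵥ x t) := sq_add_sq_mul_le_dotProduct_mulVec σ₁ σ₂ (x t)

/-- Asymptotic stability in the example of Grau et al.: if `σ₀ < 0` and `σ₁σ₂ > 1`,
every solution of `ẋ = A(t)x` with `A(t) = [[σ₀−a(t), −σ₂a(t)], [σ₁a(t), σ₀+a(t)]]`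
tends to `0` as `t → ∞`. -/
theorem zero_solution_asymptotically_stable
    (σ₀ σ₁ σ₂ : ℝ) (hσ₂ : σ₂ ≠ 0) (hσ₀ : σ₀ < 0) (hσ₁₂ : 1 < σ₁ * σ₂)
    (T : ℝ) (hT : 0 < T)
    (a : ℝ → ℝ) (ha : Continuous a) (haper : ∀ t, a (t + T) = a t)
    (A : ℝ → Matrix (Fin 2) (Fin 2) ℝ)
    (hA : ∀ t, A t = !![σ₀ - a t, -σ₂ * a t; σ₁ * a t, σ₀ + a t])
    (x : ℝ → Fin 2 → ℝ)
    (hx : ∀ t, HasDerivAt x ((A t).mulVec (x t)) t) :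
    Tendsto x atTop (nhds 0) :=
  zero_solution_asymptotically_stable_general σ₀ σ₁ σ₂ hσ₀ hσ₁₂ a A hA x hx
end
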